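/- Let φ := ∑_{i=1}^{6} v₂ᵢ·1_{I_i} where v₂ := (1, (3+√13)/2, −(5+√13)/2, −(5+√13)/2, (3+√13)/2, 1). Then Pφ(x) = λ₂·φ(x) for every x ∈ [0,1)∖(C ∪ S'), where λ₂ := −(1+√13)/6. -/

import Mathlib

open Set

/-- The successive slopes `2/3, 1/3, 1/2, 1/2, 2/3, 1/3, 1/3, 2/3, 1/2, 1/2, 1/3, 2/3`. -/
noncomputable def pwVals : Fin 12 → ℝ :=
  ![2/3, 1/3, 1/2, 1/2, 2/3, 1/3, 1/3, 2/3, 1/2, 1/2, 1/3, 2/3]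

/-- The `2`-periodic step function `τ̇` taking the value `pwVals (k-1)` on
`((k−1)/6, k/6)`, `k = 1, …, 12` (and extended `2`-periodically). -/
noncomputable def pwTaudot (x : ℝ) : ℝ :=
  pwVals ⟨(⌊6 * x⌋ % 12).toNat, by
    have h1 : (0:ℤ) ≤ ⌊6 * x⌋ % 12 := Int.emod_nonneg _ (by norm_num)
    have h2 : ⌊6 * x⌋ % 12 < 12 := Int.emod_lt_of_pos _ (by norm_num)
    omega⟩

/-- `τ(x) = ∫₀ˣ τ̇(u) du`. -/
noncomputable def pwTau : ℝ → ℝ := fun x => ∫ u in (0:ℝ)..x, pwTaudot u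

/-- The transfer operator `Pf(x) = τ̇(x)·f(τ(x)) + τ̇(x+1)·f(τ(x+1))`. -/
noncomputable def pwP (f : ℝ → ℝ) : ℝ → ℝ := fun x =>
  pwTaudot x * f (pwTau x) + pwTaudot (x + 1) * f (pwTau (x + 1))

/-- The interval `I_{i+1} = (i/6, (i+1)/6)`, `i = 0, …, 5`. -/
def Iint (i : Fin 6) : Set ℝ := Ioo ((i : ℝ) / 6) (((i : ℝ) + 1) / 6)

/-- `C = {0, 1/6, 2/6, 3/6, 4/6, 5/6}`. -/
def Cset : Set ℝ := {0, 1/6, 2/6, 3/6, 4/6, 5/6}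

/-- `S' = {τ(k/6) mod 1 : k = 0, …, 11}`. -/
noncomputable def Sprime : Set ℝ := {y | ∃ k : Fin 12, y = Int.fract (pwTau ((k : ℝ) / 6))}

/-- The left eigenvector `v₂ = (1, (3+√13)/2, −(5+√13)/2, −(5+√13)/2, (3+√13)/2, 1)`. -/
noncomputable def v2vec : Fin 6 → ℝ :=
  ![1, (3 + Real.sqrt 13) / 2, -((5 + Real.sqrt 13) / 2),
    -((5 + Real.sqrt 13) / 2), (3 + Real.sqrt 13) / 2, 1]

/-- The step function `φ = ∑ᵢ v₂ᵢ·1_{I_i}`. -/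
noncomputable def pwPhi : ℝ → ℝ := fun x =>
  ∑ i : Fin 6, v2vec i * (Iint i).indicator (fun _ => (1:ℝ)) x

/-!
The slope `τ̇` is constant on each `I_n` and on `I_n + 1` (equal to `pwVals n` and
`pwVals (n + 6)`), and `τ` is strictly increasing with `τ(k/6) = 0, 1/9, 1/6, 1/4, 1/3, 4/9, 1/2,
5/9, 2/3, 3/4, 5/6, 8/9, 1`. Hence `τ` maps `I_n` into `I_{⌊n/2⌋}` and `I_n + 1` into
`I_{⌊n/2⌋+3}`, so on `I_n` the function `Pφ` is the constant
`τ̇(n) v₂(⌊n/2⌋) + τ̇(n+6) v₂(⌊n/2⌋+3)`. The theorem is thus the statement that `v₂` is a left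
eigenvector, for `λ₂`, of the resulting `6 × 6` transition matrix, which reduces to `√13² = 13`.
-/

open MeasureTheory

lemma pwVals_pos (j : Fin 12) : 0 < pwVals j := by
  fin_cases j <;> norm_num [pwVals]

lemma pwVals_le_one (j : Fin 12) : pwVals j ≤ 1 := by
  fin_cases j <;> norm_num [pwVals]

lemma pwTaudot_pos (u : ℝ) : 0 < pwTaudot u := pwVals_pos _

lemma measurable_pwTaudot : Measurable pwTaudot :=
  Measurable.of_discrete.comp (g := fun n : ℤ => pwVals ⟨(n % 12).toNat, by omega⟩)
    (Int.measurable_floor.comp (measurable_const.mul measurable_id))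

lemma pwTaudot_intervalIntegrable (a b : ℝ) : IntervalIntegrable pwTaudot volume a b :=
  (intervalIntegrable_const (c := (1 : ℝ))).mono_fun' measurable_pwTaudot.aestronglyMeasurable
    (ae_of_all _ fun _ => by
      dsimp only
      rw [Real.norm_eq_abs, abs_of_pos (pwTaudot_pos _)]
      exact pwVals_le_one _)

lemma pwTaudot_eq_of_mem_Ico (j : Fin 12) {u : ℝ} (hu : u ∈ Ico ((j : ℝ) / 6) (((j : ℝ) + 1) / 6)) :
    pwTaudot u = pwVals j := by
  have hfloor : ⌊6 * u⌋ = (j : ℕ) := by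
    rw [Int.floor_eq_iff]
    push_cast
    constructor <;> linarith [hu.1, hu.2]
  simp only [pwTaudot, hfloor]
  congr
  omega

lemma pwTau_sub (a b : ℝ) : pwTau b - pwTau a = ∫ u in a..b, pwTaudot u := by
  rw [pwTau, pwTau, sub_eq_iff_eq_add',
    intervalIntegral.integral_add_adjacent_intervals (pwTaudot_intervalIntegrable _ _)
      (pwTaudot_intervalIntegrable _ _)]

lemma strictMono_pwTau : StrictMono pwTau := fun a b hab => by
  have := intervalIntegral.intervalIntegral_pos_of_pos_on (pwTaudot_intervalIntegrable a b)
    (fun u _ => pwTaudot_pos u) hab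
  linarith [pwTau_sub a b]

lemma pwTau_succ_div_six (j : Fin 12) :
    pwTau (((j : ℝ) + 1) / 6) = pwTau ((j : ℝ) / 6) + pwVals j / 6 := by
  have hconst : ∫ u in (j : ℝ) / 6..((j : ℝ) + 1) / 6, pwTaudot u = pwVals j / 6 := by
    rw [intervalIntegral.integral_congr_Ioo_of_le (g := fun _ => pwVals j) (by linarith)
      fun u hu => pwTaudot_eq_of_mem_Ico j (Ioo_subset_Ico_self hu)]
    simp only [intervalIntegral.integral_const, smul_eq_mul]
    ring
  linarith [pwTau_sub ((j : ℝ) / 6) (((j : ℝ) + 1) / 6)]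

lemma pwTau_div_six (j : Fin 13) : pwTau ((j : ℝ) / 6) =
    ![0, 1/9, 1/6, 1/4, 1/3, 4/9, 1/2, 5/9, 2/3, 3/4, 5/6, 8/9, 1] j := by
  induction j using Fin.induction with
  | zero => simp [pwTau]
  | succ j ih =>
    rw [Fin.val_succ, Nat.cast_succ, pwTau_succ_div_six j, ← Fin.val_castSucc, ih]
    fin_cases j <;> simp [pwVals, Matrix.cons_val] <;> norm_num

lemma eq_of_mem_Iint {y : ℝ} {i j : Fin 6} (hi : y ∈ Iint i) (hj : y ∈ Iint j) : i = j := by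
  have hij : (i : ℝ) < j + 1 := by linarith [hi.1, hj.2]
  have hji : (j : ℝ) < i + 1 := by linarith [hj.1, hi.2]
  norm_cast at hij hji
  omega

lemma pwPhi_eq_of_mem_Iint {y : ℝ} {i : Fin 6} (hy : y ∈ Iint i) : pwPhi y = v2vec i := by
  rw [pwPhi, Finset.sum_eq_single i (fun j _ hji => by
      rw [indicator_of_notMem (fun hj => hji (eq_of_mem_Iint hj hy)), mul_zero])
    fun h => (h (Finset.mem_univ i)).elim, indicator_of_mem hy, mul_one]

lemma exists_mem_Iint {x : ℝ} (hx : x ∈ Ico (0 : ℝ) 1) (hC : x ∉ Cset) : ∃ i, x ∈ Iint i := by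
  obtain ⟨hx₀, hx₁⟩ := hx
  set k := ⌊6 * x⌋₊
  have hk : k < 6 := (Nat.floor_lt (by positivity)).2 (by push_cast; linarith)
  have hk_le : (k : ℝ) ≤ 6 * x := Nat.floor_le (by positivity)
  have hk_lt : 6 * x < k + 1 := Nat.lt_floor_add_one _
  have hkC : (k : ℝ) / 6 ∈ Cset := by interval_cases k <;> norm_num [Cset]
  exact ⟨⟨k, hk⟩, lt_of_le_of_ne (by linarith) (ne_of_mem_of_not_mem hkC hC), by linarith⟩

lemma pwTaudot_of_mem_Iint {x : ℝ} {n : Fin 6} (hx : x ∈ Iint n) :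
    pwTaudot x = pwVals ⟨n, by omega⟩ ∧ pwTaudot (x + 1) = pwVals ⟨n + 6, by omega⟩ := by
  refine ⟨pwTaudot_eq_of_mem_Ico _ ⟨hx.1.le, hx.2⟩, pwTaudot_eq_of_mem_Ico _ ?_⟩
  push_cast
  constructor <;> linarith [hx.1, hx.2]

lemma pwTau_mem_Iint {x : ℝ} {n : Fin 6} (hx : x ∈ Iint n) :
    pwTau x ∈ Iint ⟨n / 2, by omega⟩ ∧ pwTau (x + 1) ∈ Iint ⟨n / 2 + 3, by omega⟩ := by
  have h₁ := strictMono_pwTau hx.1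
  have h₂ := strictMono_pwTau hx.2
  have h₃ := strictMono_pwTau (show ((n : ℝ) + 6) / 6 < x + 1 by linarith [hx.1])
  have h₄ := strictMono_pwTau (show x + 1 < ((n : ℝ) + 7) / 6 by linarith [hx.2])
  have e₁ := pwTau_div_six ⟨n, by omega⟩
  have e₂ := pwTau_div_six ⟨n + 1, by omega⟩
  have e₃ := pwTau_div_six ⟨n + 6, by omega⟩
  have e₄ := pwTau_div_six ⟨n + 7, by omega⟩
  push_cast at e₁ e₂ e₃ e₄
  simp only [e₁, e₂, e₃, e₄] at h₁ h₂ h₃ h₄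
  fin_cases n <;> norm_num [Iint] at h₁ h₂ h₃ h₄ ⊢ <;> refine ⟨⟨?_, ?_⟩, ?_, ?_⟩ <;> linarith

lemma pwP_pwPhi_of_mem_Iint {x : ℝ} {n : Fin 6} (hx : x ∈ Iint n) :
    pwP pwPhi x = pwVals ⟨n, by omega⟩ * v2vec ⟨n / 2, by omega⟩
      + pwVals ⟨n + 6, by omega⟩ * v2vec ⟨n / 2 + 3, by omega⟩ := by
  obtain ⟨hd, hd₁⟩ := pwTaudot_of_mem_Iint hx
  obtain ⟨ht, ht₁⟩ := pwTau_mem_Iint hx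
  rw [pwP, hd, hd₁, pwPhi_eq_of_mem_Iint ht, pwPhi_eq_of_mem_Iint ht₁]

lemma v2vec_eigen_equation (n : Fin 6) :
    pwVals ⟨n, by omega⟩ * v2vec ⟨n / 2, by omega⟩
      + pwVals ⟨n + 6, by omega⟩ * v2vec ⟨n / 2 + 3, by omega⟩
      = -(1 + Real.sqrt 13) / 6 * v2vec n := by
  have h13 : Real.sqrt 13 ^ 2 = 13 := Real.sq_sqrt (by norm_num)
  fin_cases n <;> simp [pwVals, v2vec] <;> linarith [h13]

/-- `Pφ(x) = λ₂·φ(x)` for every `x ∈ [0,1) ∖ (C ∪ S')`, where `λ₂ = −(1+√13)/6`. -/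
theorem stmt15 (x : ℝ) (hx : x ∈ Ico (0:ℝ) 1 \ (Cset ∪ Sprime)) :
    pwP pwPhi x = (-(1 + Real.sqrt 13) / 6) * pwPhi x := by
  obtain ⟨n, hn⟩ := exists_mem_Iint hx.1 fun h => hx.2 (Or.inl h)
  rw [pwP_pwPhi_of_mem_Iint hn, pwPhi_eq_of_mem_Iint hn, v2vec_eigen_equation]
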